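/- arXiv:2103.15651 — 2 statements merged into one kernel-verified Lean document; each statement's English description precedes it below -/
import Mathlib

section
/- The relation ∼_A on words, defined as the conjunction of equality of the four behavior relations (left-to-left, left-to-right, right-to-left, right-to-right) of a two-way automaton A, is a congruence on the free monoid A* (i.e., if u ∼_A u' and v ∼_A v' then uv ∼_A u'v'). -/
/-- A two-way automaton: deterministic transition function giving next state
and a head move in `{-1, 0, +1}`. -/
structure TwoWay (Q A : Type) where
  δ : Q → A → Q × ℤ
  move : ∀ q a, (δ q a).2 = -1 ∨ (δ q a).2 = 0 ∨ (δ q a).2 = 1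

/-- One step of the two-way automaton on word `w`; configurations are
(state, position), positions `1..|w|` carry letters, `0` is the left exit,
`|w|+1` the right exit. -/
def TwoWay.step {Q A : Type} (M : TwoWay Q A) (w : List A) (c c' : Q × ℤ) : Prop :=
  1 ≤ c.2 ∧ ∃ a, w[(c.2 - 1).toNat]? = some a ∧
    c'.1 = (M.δ c.1 a).1 ∧ c'.2 = c.2 + (M.δ c.1 a).2

def TwoWay.reach {Q A : Type} (M : TwoWay Q A) (w : List A) : Q × ℤ → Q × ℤ → Prop :=
  Relation.ReflTransGen (M.step w)

/-- Left-to-left behavior: runs starting at the first position and leaving on the left. -/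
def TwoWay.bhLL {Q A : Type} (M : TwoWay Q A) (w : List A) : Set (Q × Q) :=
  {pq | M.reach w (pq.1, 1) (pq.2, 0)}

/-- Left-to-right behavior. -/
def TwoWay.bhLR {Q A : Type} (M : TwoWay Q A) (w : List A) : Set (Q × Q) :=
  {pq | M.reach w (pq.1, 1) (pq.2, (w.length : ℤ) + 1)}

/-- Right-to-left behavior. -/
def TwoWay.bhRL {Q A : Type} (M : TwoWay Q A) (w : List A) : Set (Q × Q) :=
  {pq | M.reach w (pq.1, (w.length : ℤ)) (pq.2, 0)}

/-- Right-to-right behavior. -/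
def TwoWay.bhRR {Q A : Type} (M : TwoWay Q A) (w : List A) : Set (Q × Q) :=
  {pq | M.reach w (pq.1, (w.length : ℤ)) (pq.2, (w.length : ℤ) + 1)}

/-- `u ∼_A v`: all four behaviors coincide. -/
def TwoWay.equiv {Q A : Type} (M : TwoWay Q A) (u v : List A) : Prop :=
  M.bhLL u = M.bhLL v ∧ M.bhLR u = M.bhLR v ∧ M.bhRL u = M.bhRL v ∧ M.bhRR u = M.bhRR v

/-!
A run of `u ++ v` splits into maximal segments that stay inside `u` or inside `v`. Each segment
enters its factor at one end and leaves it at one end, so it is described by one of the four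
behaviors of that factor. Hence the behaviors of `u ++ v` are reachability relations in a graph on
(state, boundary site) whose edges are the behaviors of `u` and `v` (`Behavior.Crossing`): the
behavior of `u ++ v` is a product of the behaviors of `u` and `v`, which makes `∼_A` a congruence.
-/

namespace TwoWay

variable {Q A : Type} (M : TwoWay Q A)

theorem step_pos_bounds {w : List A} {c c' : Q × ℤ} (h : M.step w c c') :
    1 ≤ c.2 ∧ c.2 ≤ w.length := by
  obtain ⟨h1, a, ha, -⟩ := h
  obtain ⟨hlt, -⟩ := List.getElem?_eq_some_iff.1 ha
  omega

theorem step_move_bounds {w : List A} {c c' : Q × ℤ} (h : M.step w c c') :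
    c.2 - 1 ≤ c'.2 ∧ c'.2 ≤ c.2 + 1 := by
  obtain ⟨-, a, -, -, h⟩ := h
  rcases M.move c.1 a with h' | h' | h' <;> omega

theorem eq_of_reach_of_not_mem {w : List A} {c d : Q × ℤ} (h : M.reach w c d)
    (hc : c.2 < 1 ∨ w.length < c.2) : c = d := by
  rcases h.cases_head with h | ⟨c', hstep, -⟩
  · exact h
  · have := M.step_pos_bounds hstep
    omega

theorem step_append_left_iff {u v : List A} {c c' : Q × ℤ} (hc : c.2 ≤ u.length) :
    M.step (u ++ v) c c' ↔ M.step u c c' :=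
  and_congr_right fun h1 => by rw [List.getElem?_append_left (by omega)]

theorem step_append_right_iff {u v : List A} {c c' : Q × ℤ} (hc : u.length < c.2) :
    M.step (u ++ v) c c' ↔ M.step v (c.1, c.2 - u.length) (c'.1, c'.2 - u.length) := by
  have hidx : (c.2 - 1).toNat = u.length + (c.2 - u.length - 1).toNat := by omega
  simp only [step, hidx, List.getElem?_append_right (Nat.le_add_right _ _),
    Nat.add_sub_cancel_left]
  constructor <;> rintro ⟨-, a, ha, h1, h2⟩ <;> exact ⟨by omega, a, ha, h1, by omega⟩

theorem reach_append_left {u v : List A} {c c' : Q × ℤ} (h : M.reach u c c') :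
    M.reach (u ++ v) c c' :=
  Relation.ReflTransGen.mono (fun _ _ hs => (M.step_append_left_iff (M.step_pos_bounds hs).2).2 hs)
    _ _ h

theorem reach_append_right {u v : List A} {c c' : Q × ℤ} (h : M.reach v c c') :
    M.reach (u ++ v) (c.1, c.2 + u.length) (c'.1, c'.2 + u.length) :=
  Relation.ReflTransGen.lift (fun c : Q × ℤ => (c.1, c.2 + u.length)) (fun _ _ hs =>
    (M.step_append_right_iff (by have := (M.step_pos_bounds hs).1; dsimp only; omega)).2
      (by simpa using hs)) _ _ h

theorem mem_bhLR_self_of_length_eq_zero {w : List A} (hw : w.length = 0) (q : Q) :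
    (q, q) ∈ M.bhLR w := by
  simp only [bhLR, Set.mem_ofPred_eq, hw, Nat.cast_zero, zero_add]
  exact .refl

theorem mem_bhRL_self_of_length_eq_zero {w : List A} (hw : w.length = 0) (q : Q) :
    (q, q) ∈ M.bhRL w := by
  simp only [bhRL, Set.mem_ofPred_eq, hw, Nat.cast_zero]
  exact .refl

@[ext]
structure Behavior (Q : Type) where
  ll : Set (Q × Q)
  lr : Set (Q × Q)
  rl : Set (Q × Q)
  rr : Set (Q × Q)

def behavior (w : List A) : Behavior Q :=
  ⟨M.bhLL w, M.bhLR w, M.bhRL w, M.bhRR w⟩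

theorem equiv_iff_behavior_eq {u v : List A} : M.equiv u v ↔ M.behavior u = M.behavior v := by
  simp only [equiv, behavior, Behavior.mk.injEq]

inductive Site
  | leftEnd | uFirst | uLast | vFirst | vLast | rightEnd

def Site.pos (m n : ℕ) : Site → ℤ
  | leftEnd => 0
  | uFirst => 1
  | uLast => m
  | vFirst => m + 1
  | vLast => m + n
  | rightEnd => m + n + 1

namespace Behavior

inductive Crossing (x y : Behavior Q) : Q × Site → Q × Site → Prop
  | leftLL {p q : Q} : (p, q) ∈ x.ll → Crossing x y (p, .uFirst) (q, .leftEnd)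
  | leftLR {p q : Q} : (p, q) ∈ x.lr → Crossing x y (p, .uFirst) (q, .vFirst)
  | leftRL {p q : Q} : (p, q) ∈ x.rl → Crossing x y (p, .uLast) (q, .leftEnd)
  | leftRR {p q : Q} : (p, q) ∈ x.rr → Crossing x y (p, .uLast) (q, .vFirst)
  | rightLL {p q : Q} : (p, q) ∈ y.ll → Crossing x y (p, .vFirst) (q, .uLast)
  | rightLR {p q : Q} : (p, q) ∈ y.lr → Crossing x y (p, .vFirst) (q, .rightEnd)
  | rightRL {p q : Q} : (p, q) ∈ y.rl → Crossing x y (p, .vLast) (q, .uLast)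
  | rightRR {p q : Q} : (p, q) ∈ y.rr → Crossing x y (p, .vLast) (q, .rightEnd)

instance : Mul (Behavior Q) where
  mul x y :=
    ⟨{pq | Relation.ReflTransGen (Crossing x y) (pq.1, .uFirst) (pq.2, .leftEnd)},
     {pq | Relation.ReflTransGen (Crossing x y) (pq.1, .uFirst) (pq.2, .rightEnd)},
     {pq | Relation.ReflTransGen (Crossing x y) (pq.1, .vLast) (pq.2, .leftEnd)},
     {pq | Relation.ReflTransGen (Crossing x y) (pq.1, .vLast) (pq.2, .rightEnd)}⟩

end Behavior

open Behavior (Crossing)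

section Soundness

variable {u v : List A}

theorem reach_append_of_crossing {a b : Q × Site}
    (h : Crossing (M.behavior u) (M.behavior v) a b) :
    M.reach (u ++ v) (a.1, a.2.pos u.length v.length) (b.1, b.2.pos u.length v.length) := by
  cases h with
  | leftLL h | leftLR h | leftRL h | leftRR h => exact M.reach_append_left h
  | rightLL h | rightLR h | rightRL h | rightRR h =>
    simpa [Site.pos, add_comm, add_left_comm, add_assoc] using M.reach_append_right (u := u) h

theorem reach_append_of_crossingReach {a b : Q × Site}
    (h : Relation.ReflTransGen (Crossing (M.behavior u) (M.behavior v)) a b) :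
    M.reach (u ++ v) (a.1, a.2.pos u.length v.length) (b.1, b.2.pos u.length v.length) :=
  Relation.ReflTransGen.lift' (fun a : Q × Site => (a.1, a.2.pos u.length v.length))
    (fun _ _ => M.reach_append_of_crossing) _ _ h

end Soundness

/-- Invariant of the completeness argument, propagated backwards along a run of `u ++ v` that
ends at `x`. -/
def ExitsToward (u v : List A) (x : Q × Site) (c : Q × ℤ) : Prop :=
  let R := Relation.ReflTransGen (Crossing (M.behavior u) (M.behavior v))
  (1 ≤ c.2 ∧ c.2 ≤ u.length → ∃ q,
    (M.reach u c (q, 0) ∧ R (q, .leftEnd) x) ∨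
    (M.reach u c (q, u.length + 1) ∧ R (q, .vFirst) x)) ∧
  (u.length < c.2 ∧ c.2 ≤ u.length + v.length → ∃ q,
    (M.reach v (c.1, c.2 - u.length) (q, 0) ∧ R (q, .uLast) x) ∨
    (M.reach v (c.1, c.2 - u.length) (q, v.length + 1) ∧ R (q, .rightEnd) x))

section Completeness

variable {u v : List A} {x : Q × Site} {s : Site} {q : Q}

local notation "CR" => Relation.ReflTransGen (Crossing (M.behavior u) (M.behavior v))

theorem crossingReach_of_reach_of_exit (hs : s = .leftEnd ∨ s = .rightEnd)
    (hx : x.2 = .leftEnd ∨ x.2 = .rightEnd)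
    (h : M.reach (u ++ v) (q, s.pos u.length v.length) (x.1, x.2.pos u.length v.length)) :
    CR (q, s) x := by
  have h := M.eq_of_reach_of_not_mem h (by rcases hs with rfl | rfl <;> simp [Site.pos])
  obtain ⟨t, e⟩ := x
  obtain ⟨rfl, he⟩ := Prod.mk.inj h
  obtain rfl : s = e := by
    rcases hs with rfl | rfl <;> rcases hx with rfl | rfl <;> simp [Site.pos] at he ⊢ <;> omega
  exact .refl

-- When a factor is empty, two sites denote the same position; they are joined by an edge
-- labelled by the identity behavior.
theorem crossingReach_vFirst_of_exitsToward (hx : x.2 = .leftEnd ∨ x.2 = .rightEnd)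
    (hc : M.ExitsToward u v x (q, Site.vFirst.pos u.length v.length))
    (h : M.reach (u ++ v) (q, Site.vFirst.pos u.length v.length)
      (x.1, x.2.pos u.length v.length)) :
    CR (q, .vFirst) x := by
  rcases Nat.eq_zero_or_pos v.length with hv | hv
  · exact .head (.rightLR (M.mem_bhLR_self_of_length_eq_zero hv q))
      (M.crossingReach_of_reach_of_exit (.inr rfl) hx (by simpa [Site.pos, hv] using h))
  · obtain ⟨q', ⟨hr, hq'⟩ | ⟨hr, hq'⟩⟩ := hc.2 ⟨by simp [Site.pos], by simp [Site.pos]; omega⟩ <;>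
      simp only [Site.pos, add_sub_cancel_left] at hr
    · exact .head (.rightLL hr) hq'
    · exact .head (.rightLR hr) hq'

theorem crossingReach_uLast_of_exitsToward (hx : x.2 = .leftEnd ∨ x.2 = .rightEnd)
    (hc : M.ExitsToward u v x (q, Site.uLast.pos u.length v.length))
    (h : M.reach (u ++ v) (q, Site.uLast.pos u.length v.length)
      (x.1, x.2.pos u.length v.length)) :
    CR (q, .uLast) x := by
  rcases Nat.eq_zero_or_pos u.length with hu | hu
  · exact .head (.leftRL (M.mem_bhRL_self_of_length_eq_zero hu q))
      (M.crossingReach_of_reach_of_exit (.inl rfl) hx (by simpa [Site.pos, hu] using h))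
  · obtain ⟨q', ⟨hr, hq'⟩ | ⟨hr, hq'⟩⟩ := hc.1 ⟨by simp [Site.pos]; omega, le_rfl⟩
    · exact .head (.leftRL hr) hq'
    · exact .head (.leftRR hr) hq'

theorem crossingReach_of_exitsToward (hx : x.2 = .leftEnd ∨ x.2 = .rightEnd)
    (hc : M.ExitsToward u v x (q, s.pos u.length v.length))
    (h : M.reach (u ++ v) (q, s.pos u.length v.length) (x.1, x.2.pos u.length v.length)) :
    CR (q, s) x := by
  cases s with
  | leftEnd => exact M.crossingReach_of_reach_of_exit (.inl rfl) hx h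
  | rightEnd => exact M.crossingReach_of_reach_of_exit (.inr rfl) hx h
  | vFirst => exact M.crossingReach_vFirst_of_exitsToward hx hc h
  | uLast => exact M.crossingReach_uLast_of_exitsToward hx hc h
  | uFirst =>
    rcases Nat.eq_zero_or_pos u.length with hu | hu
    · have hpos : Site.uFirst.pos u.length v.length = Site.vFirst.pos u.length v.length := by
        simp [Site.pos, hu]
      rw [hpos] at hc h
      exact .head (.leftLR (M.mem_bhLR_self_of_length_eq_zero hu q))
        (M.crossingReach_vFirst_of_exitsToward hx hc h)
    · obtain ⟨q', ⟨hr, hq'⟩ | ⟨hr, hq'⟩⟩ := hc.1 ⟨le_rfl, by simp [Site.pos]; omega⟩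
      · exact .head (.leftLL hr) hq'
      · exact .head (.leftLR hr) hq'
  | vLast =>
    rcases Nat.eq_zero_or_pos v.length with hv | hv
    · have hpos : Site.vLast.pos u.length v.length = Site.uLast.pos u.length v.length := by
        simp [Site.pos, hv]
      rw [hpos] at hc h
      exact .head (.rightRL (M.mem_bhRL_self_of_length_eq_zero hv q))
        (M.crossingReach_uLast_of_exitsToward hx hc h)
    · obtain ⟨q', ⟨hr, hq'⟩ | ⟨hr, hq'⟩⟩ := hc.2 ⟨by simp [Site.pos]; omega, le_rfl⟩ <;>
        simp only [Site.pos, add_sub_cancel_left] at hr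
      · exact .head (.rightRL hr) hq'
      · exact .head (.rightRR hr) hq'

theorem exitsToward_left_of_step (hx : x.2 = .leftEnd ∨ x.2 = .rightEnd) {c c' : Q × ℤ}
    (hc : 1 ≤ c.2 ∧ c.2 ≤ u.length) (hstep : M.step (u ++ v) c c')
    (hc' : M.ExitsToward u v x c')
    (h : M.reach (u ++ v) c' (x.1, x.2.pos u.length v.length)) :
    ∃ q, (M.reach u c (q, 0) ∧ CR (q, .leftEnd) x) ∨
      (M.reach u c (q, u.length + 1) ∧ CR (q, .vFirst) x) := by
  have hs := (M.step_append_left_iff hc.2).1 hstep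
  have := M.step_move_bounds hs
  obtain ⟨q', i'⟩ := c'
  obtain rfl | hi' | rfl : i' = 0 ∨ (1 ≤ i' ∧ i' ≤ u.length) ∨ i' = u.length + 1 := by omega
  · exact ⟨q', .inl ⟨.single hs, M.crossingReach_of_exitsToward hx (s := .leftEnd) hc' h⟩⟩
  · obtain ⟨q, hq⟩ := hc'.1 hi'
    exact ⟨q, hq.imp (And.imp_left (.head hs)) (And.imp_left (.head hs))⟩
  · exact ⟨q', .inr ⟨.single hs, M.crossingReach_of_exitsToward hx (s := .vFirst) hc' h⟩⟩

theorem exitsToward_right_of_step (hx : x.2 = .leftEnd ∨ x.2 = .rightEnd) {c c' : Q × ℤ}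
    (hc : u.length < c.2 ∧ c.2 ≤ u.length + v.length) (hstep : M.step (u ++ v) c c')
    (hc' : M.ExitsToward u v x c')
    (h : M.reach (u ++ v) c' (x.1, x.2.pos u.length v.length)) :
    ∃ q, (M.reach v (c.1, c.2 - u.length) (q, 0) ∧ CR (q, .uLast) x) ∨
      (M.reach v (c.1, c.2 - u.length) (q, v.length + 1) ∧ CR (q, .rightEnd) x) := by
  have hs := (M.step_append_right_iff hc.1).1 hstep
  have := M.step_move_bounds hs
  obtain ⟨q', i'⟩ := c'
  obtain rfl | hi' | rfl :
      i' = u.length ∨ (u.length < i' ∧ i' ≤ u.length + v.length) ∨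
        i' = u.length + v.length + 1 := by
    simp only at this; omega
  · rw [sub_self] at hs
    exact ⟨q', .inl ⟨.single hs, M.crossingReach_of_exitsToward hx (s := .uLast) hc' h⟩⟩
  · obtain ⟨q, hq⟩ := hc'.2 hi'
    exact ⟨q, hq.imp (And.imp_left (.head hs)) (And.imp_left (.head hs))⟩
  · rw [add_assoc, add_sub_cancel_left] at hs
    exact ⟨q', .inr ⟨.single hs, M.crossingReach_of_exitsToward hx (s := .rightEnd) hc' h⟩⟩

theorem exitsToward_of_reach (hx : x.2 = .leftEnd ∨ x.2 = .rightEnd) {c : Q × ℤ}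
    (h : M.reach (u ++ v) c (x.1, x.2.pos u.length v.length)) : M.ExitsToward u v x c := by
  induction h using Relation.ReflTransGen.head_induction_on with
  | refl =>
    constructor <;> rintro ⟨h1, h2⟩ <;> rcases hx with hx | hx <;>
      simp only [hx, Site.pos] at h1 h2 <;> omega
  | head hstep hrest ih =>
    exact ⟨fun hc => M.exitsToward_left_of_step hx hc hstep ih hrest,
      fun hc => M.exitsToward_right_of_step hx hc hstep ih hrest⟩

theorem reach_append_iff_crossingReach (hx : x.2 = .leftEnd ∨ x.2 = .rightEnd) {p : Q} :
    M.reach (u ++ v) (p, s.pos u.length v.length) (x.1, x.2.pos u.length v.length) ↔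
      CR (p, s) x :=
  ⟨fun h => M.crossingReach_of_exitsToward hx (M.exitsToward_of_reach hx h) h,
    M.reach_append_of_crossingReach⟩

end Completeness

theorem behavior_append (u v : List A) :
    M.behavior (u ++ v) = M.behavior u * M.behavior v := by
  ext ⟨p, q⟩ <;>
    simp only [behavior, bhLL, bhLR, bhRL, bhRR, List.length_append, Nat.cast_add,
      Set.mem_ofPred_eq]
  · exact M.reach_append_iff_crossingReach (x := (q, .leftEnd)) (.inl rfl) (s := .uFirst)
  · exact M.reach_append_iff_crossingReach (x := (q, .rightEnd)) (.inr rfl) (s := .uFirst)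
  · exact M.reach_append_iff_crossingReach (x := (q, .leftEnd)) (.inl rfl) (s := .vLast)
  · exact M.reach_append_iff_crossingReach (x := (q, .rightEnd)) (.inr rfl) (s := .vLast)

end TwoWay

/-- The relation `∼_A` is a congruence on the free monoid `A*`. -/
theorem stmt_0 {Q A : Type} (M : TwoWay Q A) (u u' v v' : List A)
    (hu : M.equiv u u') (hv : M.equiv v v') : M.equiv (u ++ v) (u' ++ v') := by
  rw [TwoWay.equiv_iff_behavior_eq] at hu hv ⊢
  rw [TwoWay.behavior_append, TwoWay.behavior_append, hu, hv]
end

section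
/- For a deterministic two-way automaton, if two words u and u' satisfy ∼_A (all four behaviors equal), then for every context (v,w), the context paths coincide: path_{vw}(v u w) = path_{vw}(v u' w). -/
/-- A two-way automaton with initial state and final states. -/
structure TwoWayAcc (Q A : Type) extends TwoWay Q A where
  q0 : Q
  F : Set Q

/-- `p` is the (state, position) sequence of the accepting run of `M` over `w`:
it starts at the first position in the initial state, follows the transition
steps, and ends on the right end in a final state. -/
def TwoWayAcc.IsAccPath {Q A : Type} (M : TwoWayAcc Q A) (w : List A)
    (p : List (Q × ℤ)) : Prop :=
  p.head? = some (M.q0, 1) ∧ List.Chain' (M.toTwoWay.step w) p ∧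
    ∃ qf, p.getLast? = some (qf, (w.length : ℤ) + 1) ∧ qf ∈ M.F

/-- Projection of a path onto an ordered sequence `I` of positions: keep only
configurations whose position lies in `I` and rename positions by their index
in `I`. -/
def projPath {Q : Type} (I : List ℤ) (p : List (Q × ℤ)) : List (Q × ℕ) :=
  (p.filter fun c => decide (c.2 ∈ I)).map fun c => (c.1, I.idxOf c.2)

/-- The positions of the context `(v, w)` inside `v x w`, for a middle word `x`:
positions `1..|v|` and `|v|+|x|+1..|v|+|x|+|w|`. -/
def ctxI {A : Type} (v x w : List A) : List ℤ :=
  ((List.range v.length).map fun i => (i : ℤ) + 1) ++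
    ((List.range w.length).map fun i => (v.length : ℤ) + x.length + i + 1)

/-! A run over `v u w` alternates between steps in the context and maximal excursions into
`u`. Each excursion enters `u` at one end and leaves it off one end, so its entry and exit
states form a pair in one of the four behaviours of `u`; as `u ∼_A u'`, there is a run over
`u'` with the same entry side, exit side and states. Replacing every excursion by such a run
gives a run over `v u' w` with the same context path, and by determinism it is the accepting
run over `v u' w`. -/

open List

theorem List.IsChain.eq_of_functional {α : Type*} {R : α → α → Prop}
    (hR : ∀ a b c, R a b → R a c → b = c) :
    ∀ {l₁ l₂ : List α}, l₁.IsChain R → l₂.IsChain R → l₁.head? = l₂.head? →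
      (∀ a ∈ l₁.getLast?, ∀ b, ¬ R a b) → (∀ a ∈ l₂.getLast?, ∀ b, ¬ R a b) → l₁ = l₂
  | [], [], _, _, _, _, _ => rfl
  | [], _ :: _, _, _, hh, _, _ | _ :: _, [], _, _, hh, _, _ => by simp at hh
  | a :: t₁, a' :: t₂, h₁, h₂, hh, ht₁, ht₂ => by
    obtain rfl : a = a' := by simpa using hh
    match t₁, t₂, h₁, h₂ with
    | [], [], _, _ => rfl
    | [], b :: _, _, h₂ => exact absurd (isChain_cons_cons.1 h₂).1 (ht₁ a (by simp) b)
    | b :: _, [], h₁, _ => exact absurd (isChain_cons_cons.1 h₁).1 (ht₂ a (by simp) b)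
    | b :: t₁, b' :: t₂, h₁, h₂ =>
      obtain rfl := hR _ _ _ (isChain_cons_cons.1 h₁).1 (isChain_cons_cons.1 h₂).1
      exact congrArg (a :: ·)
        (eq_of_functional hR h₁.tail h₂.tail rfl (by simpa using ht₁) (by simpa using ht₂))

variable {Q A : Type}

theorem projPath_append (I : List ℤ) (l₁ l₂ : List (Q × ℤ)) :
    projPath I (l₁ ++ l₂) = projPath I l₁ ++ projPath I l₂ := by
  simp [projPath, filter_append]

theorem projPath_cons (I : List ℤ) (c : Q × ℤ) (l : List (Q × ℤ)) :
    projPath I (c :: l) = projPath I [c] ++ projPath I l :=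
  projPath_append I [c] l

theorem projPath_eq_nil {I : List ℤ} {l : List (Q × ℤ)} (h : ∀ c ∈ l, c.2 ∉ I) :
    projPath I l = [] := by
  simpa [projPath, filter_eq_nil_iff] using h

theorem idxOf_map_of_injOn {α β : Type*} [DecidableEq α] [DecidableEq β] {f : α → β}
    {S : Set α} (hf : S.InjOn f) {l : List α} (hl : ∀ b ∈ l, b ∈ S) {a : α} (ha : a ∈ S) :
    (l.map f).idxOf (f a) = l.idxOf a := by
  induction l with
  | nil => rfl
  | cons b l ih =>
    have hb := hl b mem_cons_self
    by_cases hba : b = a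
    · subst hba; simp
    · rw [map_cons, idxOf_cons_ne _ (hf.ne hb ha hba), idxOf_cons_ne _ hba,
        ih fun c hc => hl c (mem_cons_of_mem _ hc)]

theorem projPath_map_singleton {I : List ℤ} {f : ℤ → ℤ} {S : Set ℤ} (hf : S.InjOn f)
    (hI : ∀ i ∈ I, i ∈ S) (q : Q) {s : ℤ} (hs : s ∈ S) :
    projPath (I.map f) [(q, f s)] = projPath I [(q, s)] := by
  have hmem : f s ∈ I.map f ↔ s ∈ I := by
    refine ⟨fun h => ?_, mem_map_of_mem⟩
    obtain ⟨i, hi, hfi⟩ := mem_map.1 h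
    exact hf (hI i hi) hs hfi ▸ hi
  simp only [projPath, filter_cons, filter_nil, hmem]
  by_cases h : s ∈ I <;> simp [h, idxOf_map_of_injOn hf hI hs]

/-- Where a position of `v u w` lying outside `u` sits in `v u' w`. -/
def ctxShift (v u u' : List A) (s : ℤ) : ℤ :=
  if s ≤ v.length then s else s + u'.length - u.length

theorem ctxShift_of_le {v u u' : List A} {s : ℤ} (hs : s ≤ v.length) : ctxShift v u u' s = s :=
  if_pos hs

theorem ctxShift_of_lt {v u u' : List A} {s : ℤ} (hs : v.length < s) :
    ctxShift v u u' s = s + u'.length - u.length :=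
  if_neg (by omega)

theorem injOn_ctxShift (v u u' : List A) :
    Set.InjOn (ctxShift v u u') {s | s ≤ v.length ∨ v.length + u.length < s} := by
  intro a ha b hb hab
  simp only [Set.mem_ofPred_eq, ctxShift] at ha hb hab
  split_ifs at hab <;> omega

theorem ctxI_eq_map_ctxShift (v u u' w : List A) :
    ctxI v u' w = (ctxI v u w).map (ctxShift v u u') := by
  simp only [ctxI, map_append, map_map]
  congr 1 <;> refine map_congr_left fun i hi => ?_ <;>
    simp only [pure_def, bind_eq_flatMap, mem_flatMap, mem_range, mem_cons, not_mem_nil,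
      or_false] at hi <;>
    obtain ⟨a, ha, rfl⟩ := hi <;> simp only [Function.comp_apply, ctxShift] <;> split_ifs <;> omega

theorem le_or_lt_of_mem_ctxI {v x w : List A} {s : ℤ} (hs : s ∈ ctxI v x w) :
    s ≤ v.length ∨ v.length + x.length < s := by
  simp only [ctxI, pure_def, bind_eq_flatMap, mem_append, mem_map, mem_flatMap, mem_range,
    mem_cons, not_mem_nil, or_false] at hs
  rcases hs with ⟨_, ⟨i, hi, rfl⟩, rfl⟩ | ⟨_, ⟨i, hi, rfl⟩, rfl⟩ <;> omega

theorem projPath_ctxShift (v u u' w : List A) (q : Q) {s : ℤ}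
    (hs : s ≤ v.length ∨ v.length + u.length < s) :
    projPath (ctxI v u w) [(q, s)] = projPath (ctxI v u' w) [(q, ctxShift v u u' s)] := by
  rw [ctxI_eq_map_ctxShift v u u',
    projPath_map_singleton (injOn_ctxShift v u u') (fun _ => le_or_lt_of_mem_ctxI) q hs]

theorem projPath_eq_nil_of_mid {v x w : List A} {l : List (Q × ℤ)}
    (h : ∀ c ∈ l, v.length < c.2 ∧ c.2 ≤ v.length + x.length) :
    projPath (ctxI v x w) l = [] :=
  projPath_eq_nil fun c hc hI => by have := h c hc; have := le_or_lt_of_mem_ctxI hI; omega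

theorem getElem?_append_mid (v x w : List A) {i : ℤ} (h₁ : 1 ≤ i) (h₂ : i ≤ x.length) :
    (v ++ x ++ w)[(v.length + i - 1).toNat]? = x[(i - 1).toNat]? := by
  rw [show (v.length + i - 1).toNat = v.length + (i - 1).toNat by omega, append_assoc,
    getElem?_append_right (by omega), Nat.add_sub_cancel_left, getElem?_append_left (by omega)]

theorem getElem?_ctxShift (v u u' w : List A) {s : ℤ} (h₁ : 1 ≤ s)
    (hs : s ≤ v.length ∨ v.length + u.length < s) :
    (v ++ u ++ w)[(s - 1).toNat]? = (v ++ u' ++ w)[(ctxShift v u u' s - 1).toNat]? := by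
  unfold ctxShift
  split_ifs with hv
  · rw [append_assoc, append_assoc, getElem?_append_left (by omega),
      getElem?_append_left (by omega)]
  · rw [getElem?_append_right (by simp; omega), getElem?_append_right (by simp; omega)]
    congr 1
    simp only [length_append]
    omega

namespace TwoWay

variable {M : TwoWay Q A}

theorem step_bounds {x : List A} {c d : Q × ℤ} (h : M.step x c d) :
    1 ≤ c.2 ∧ c.2 ≤ x.length ∧ c.2 - 1 ≤ d.2 ∧ d.2 ≤ c.2 + 1 := by
  obtain ⟨h₁, a, ha, -, hd⟩ := h
  have := (List.getElem?_eq_some_iff.1 ha).1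
  rcases M.move c.1 a with hm | hm | hm <;> omega

theorem step_functional {x : List A} {c d d' : Q × ℤ} (h : M.step x c d) (h' : M.step x c d') :
    d = d' := by
  obtain ⟨-, a, ha, h₁, h₂⟩ := h
  obtain ⟨-, a', ha', h₁', h₂'⟩ := h'
  obtain rfl : a = a' := Option.some_inj.1 (ha.symm.trans ha')
  exact Prod.ext (h₁.trans h₁'.symm) (h₂.trans h₂'.symm)

theorem step_of_getElem?_eq {x y : List A} {q : Q} {s s' t : ℤ} {d : Q × ℤ} (hs' : 1 ≤ s')
    (hxy : x[(s - 1).toNat]? = y[(s' - 1).toNat]?) (ht : t - s' = d.2 - s)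
    (h : M.step x (q, s) d) : M.step y (q, s') (d.1, t) := by
  obtain ⟨-, a, ha, h₁, h₂⟩ := h
  exact ⟨hs', a, hxy ▸ ha, h₁, by simp only at h₂ ⊢; omega⟩

theorem step_append_mid (v w : List A) {x : List A} {q : Q} {i : ℤ} {d : Q × ℤ}
    (h : M.step x (q, i) d) : M.step (v ++ x ++ w) (q, v.length + i) (d.1, v.length + d.2) := by
  have := step_bounds h
  exact step_of_getElem?_eq (by omega) (getElem?_append_mid v x w this.1 this.2.1).symm
    (by omega) h

theorem step_of_step_append_mid {v x w : List A} {q : Q} {i : ℤ} {d : Q × ℤ}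
    (h : M.step (v ++ x ++ w) (q, v.length + i) d) (h₁ : 1 ≤ i) (h₂ : i ≤ x.length) :
    M.step x (q, i) (d.1, d.2 - v.length) :=
  step_of_getElem?_eq h₁ (getElem?_append_mid v x w h₁ h₂) (by omega) h

theorem step_ctxShift {v u u' w : List A} {q : Q} {s : ℤ} {d : Q × ℤ}
    (hs : s ≤ v.length ∨ v.length + u.length < s) (h : M.step (v ++ u ++ w) (q, s) d) :
    M.step (v ++ u' ++ w) (q, ctxShift v u u' s) (d.1, d.2 - s + ctxShift v u u' s) := by
  have h₁ := (step_bounds h).1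
  have : 1 ≤ ctxShift v u u' s := by unfold ctxShift; split_ifs <;> omega
  exact step_of_getElem?_eq this (getElem?_ctxShift v u u' w h₁ hs) (by omega) h

def IsRightExitRun (M : TwoWay Q A) (x : List A) (p : List (Q × ℤ)) : Prop :=
  p.IsChain (M.step x) ∧ ∃ q, p.getLast? = some (q, (x.length : ℤ) + 1)

theorem IsRightExitRun.eq {x : List A} {p₁ p₂ : List (Q × ℤ)} (h₁ : M.IsRightExitRun x p₁)
    (h₂ : M.IsRightExitRun x p₂) (hh : p₁.head? = p₂.head?) : p₁ = p₂ := by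
  have halt : ∀ {p}, M.IsRightExitRun x p → ∀ c ∈ p.getLast?, ∀ d, ¬ M.step x c d := by
    rintro p ⟨-, q, hq⟩ c hc d hd
    obtain rfl : (q, (x.length : ℤ) + 1) = c := by simpa [hq] using hc
    have := (step_bounds hd).2.1
    omega
  exact IsChain.eq_of_functional (R := M.step x) (fun _ _ _ => step_functional) h₁.1 h₂.1 hh
    (halt h₁) (halt h₂)

theorem IsRightExitRun.append {x : List A} {l p : List (Q × ℤ)}
    (hc : (l ++ p).IsChain (M.step x)) (hp : M.IsRightExitRun x p) :
    M.IsRightExitRun x (l ++ p) := by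
  obtain ⟨-, q, hq⟩ := hp
  exact ⟨hc, q, by rwa [getLast?_append_of_ne_nil _ (by rintro rfl; simp at hq)]⟩

theorem IsRightExitRun.of_append {x : List A} {l p : List (Q × ℤ)}
    (h : M.IsRightExitRun x (l ++ p)) (hp : p ≠ []) : M.IsRightExitRun x p := by
  obtain ⟨hc, q, hq⟩ := h
  exact ⟨hc.right_of_append, q, by rwa [getLast?_append_of_ne_nil _ hp] at hq⟩

/-- A run enters `x` at its first letter (`true`) or at its last one, and leaves it off its
left end (`true`) or off its right end. -/
def entryPos (x : List A) : Bool → ℤ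
  | true => 1
  | false => x.length

def exitPos (x : List A) : Bool → ℤ
  | true => 0
  | false => x.length + 1

theorem equiv.reach_exitPos {u u' : List A} (h : M.equiv u u') (b b' : Bool) {q q' : Q}
    (hr : M.reach u (q, entryPos u b) (q', exitPos u b')) :
    M.reach u' (q, entryPos u' b) (q', exitPos u' b') := by
  obtain ⟨hLL, hLR, hRL, hRR⟩ := h
  cases b <;> cases b'
  exacts [(hRR ▸ hr : (q, q') ∈ M.bhRR u'), (hRL ▸ hr : (q, q') ∈ M.bhRL u'),
    (hLR ▸ hr : (q, q') ∈ M.bhLR u'), (hLL ▸ hr : (q, q') ∈ M.bhLL u')]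

theorem ctxShift_exitPos (v u u' : List A) (b : Bool) :
    ctxShift v u u' (v.length + exitPos u b) = v.length + exitPos u' b := by
  unfold ctxShift
  cases b <;> simp only [exitPos] <;> split_ifs <;> omega

theorem IsRightExitRun.exists_split_at_exit {v u w : List A} :
    ∀ {p : List (Q × ℤ)} {q : Q} {i : ℤ}, M.IsRightExitRun (v ++ u ++ w) p →
      p.head? = some (q, v.length + i) → 0 ≤ i → i ≤ u.length + 1 →
      ∃ p₁ p₂ q' b, p = p₁ ++ p₂ ∧ (∀ c ∈ p₁, v.length < c.2 ∧ c.2 ≤ v.length + u.length) ∧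
        p₂.head? = some (q', v.length + exitPos u b) ∧ M.reach u (q, i) (q', exitPos u b)
  | [], _, _, _, hh, _, _ => by simp at hh
  | c :: t, q, i, hp, hh, hi₀, hi₁ => by
    obtain rfl : c = (q, v.length + i) := by simpa using hh
    rcases (show i = 0 ∨ i = u.length + 1 ∨ (1 ≤ i ∧ i ≤ u.length) by omega) with
      rfl | rfl | ⟨hi₀, hi₁⟩
    · exact ⟨[], _, q, true, rfl, by simp, by simp [exitPos], .refl⟩
    · exact ⟨[], _, q, false, rfl, by simp, by simp [exitPos], .refl⟩
    cases t with
    | nil =>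
      obtain ⟨-, q', hq⟩ := hp
      simp only [getLast?_singleton, Option.some.injEq, Prod.mk.injEq, length_append] at hq
      omega
    | cons d t =>
      have hstep := (isChain_cons_cons.1 hp.1).1
      have := step_bounds hstep
      obtain ⟨p₁, p₂, q', b, hdt, hmid, hh₂, hr⟩ :=
        exists_split_at_exit (hp.of_append (l := [_]) (by simp)) (q := d.1) (i := d.2 - v.length)
          (by simp) (by simp only at this; omega) (by simp only at this; omega)
      refine ⟨(q, v.length + i) :: p₁, p₂, q', b, by rw [hdt]; rfl,
        forall_mem_cons.2 ⟨⟨by omega, by omega⟩, hmid⟩, hh₂,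
        .head (step_of_step_append_mid hstep hi₀ hi₁) hr⟩

theorem exists_append_of_reach (v w : List A) {x : List A} {c c' : Q × ℤ} (h : M.reach x c c')
    {p : List (Q × ℤ)} (hp : p.IsChain (M.step (v ++ x ++ w)))
    (hh : p.head? = some (c'.1, v.length + c'.2)) :
    ∃ l, (l ++ p).IsChain (M.step (v ++ x ++ w)) ∧ (l ++ p).head? = some (c.1, v.length + c.2) ∧
      ∀ d ∈ l, v.length < d.2 ∧ d.2 ≤ v.length + x.length := by
  induction h using Relation.ReflTransGen.head_induction_on with
  | refl => exact ⟨[], hp, hh, by simp⟩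
  | @head c d hstep _ ih =>
    obtain ⟨l, hl, hlh, hmid⟩ := ih
    have := step_bounds hstep
    refine ⟨(c.1, v.length + c.2) :: l, hl.cons ?_, rfl, ?_⟩
    · rw [hlh]
      rintro _ ⟨⟩
      exact step_append_mid v w hstep
    · exact forall_mem_cons.2 ⟨⟨by omega, by omega⟩, hmid⟩

def HasTwinRun (M : TwoWay Q A) (v u u' w : List A) (p : List (Q × ℤ)) (c : Q × ℤ) : Prop :=
  ∃ p', M.IsRightExitRun (v ++ u' ++ w) p' ∧ p'.head? = some c ∧
    projPath (ctxI v u w) p = projPath (ctxI v u' w) p'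

section

variable {v u u' w : List A}

/-- `ih` is `hasTwinRun_of_outside` for runs no longer than `p`: the two are proved together. -/
theorem hasTwinRun_of_entry (h : M.equiv u u') {p : List (Q × ℤ)} {q : Q} {b : Bool}
    (ih : ∀ p₂ : List (Q × ℤ), p₂.length ≤ p.length → M.IsRightExitRun (v ++ u ++ w) p₂ →
      ∀ q s, p₂.head? = some (q, s) → (s ≤ v.length ∨ v.length + u.length < s) →
        M.HasTwinRun v u u' w p₂ (q, ctxShift v u u' s))
    (hp : M.IsRightExitRun (v ++ u ++ w) p) (hh : p.head? = some (q, v.length + entryPos u b)) :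
    M.HasTwinRun v u u' w p (q, v.length + entryPos u' b) := by
  obtain ⟨p₁, p₂, q', b', rfl, hmid, hh₂, hr⟩ :=
    hp.exists_split_at_exit hh (by cases b <;> simp [entryPos]) (by cases b <;> simp [entryPos])
  obtain ⟨p₂', hrun', hh', hproj⟩ := ih p₂ (by simp) (hp.of_append (by rintro rfl; simp at hh₂))
    q' _ hh₂ (by cases b' <;> simp only [exitPos] <;> omega)
  rw [ctxShift_exitPos] at hh'
  obtain ⟨l, hl, hlh, hlmid⟩ := exists_append_of_reach v w (h.reach_exitPos b b' hr) hrun'.1 hh'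
  refine ⟨l ++ p₂', hrun'.append hl, hlh, ?_⟩
  rw [projPath_append, projPath_append, projPath_eq_nil_of_mid hmid,
    projPath_eq_nil_of_mid hlmid, hproj]

theorem hasTwinRun_of_outside (h : M.equiv u u') (p : List (Q × ℤ))
    (hp : M.IsRightExitRun (v ++ u ++ w) p) (q : Q) (s : ℤ) (hh : p.head? = some (q, s))
    (hs : s ≤ v.length ∨ v.length + u.length < s) :
    M.HasTwinRun v u u' w p (q, ctxShift v u u' s) := by
  match p, hp, hh with
  | [c], hp, hh =>
    obtain rfl : c = (q, s) := by simpa using hh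
    obtain ⟨-, q', hq⟩ := hp
    simp only [getLast?_singleton, Option.some.injEq, Prod.mk.injEq, length_append] at hq
    refine ⟨[(q, ctxShift v u u' s)], ⟨isChain_singleton _, q, ?_⟩, rfl,
      projPath_ctxShift v u u' w q hs⟩
    rw [getLast?_singleton, ctxShift_of_lt (by omega), length_append, length_append]
    congr 2
    omega
  | c :: d :: t, hp, hh =>
    obtain rfl : c = (q, s) := by simpa using hh
    have hstep := (isChain_cons_cons.1 hp.1).1
    have hd := step_bounds hstep
    simp only at hd
    have hrun : M.IsRightExitRun (v ++ u ++ w) (d :: t) := hp.of_append (l := [_]) (by simp)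
    have htwin : M.HasTwinRun v u u' w (d :: t) (d.1, d.2 - s + ctxShift v u u' s) := by
      by_cases hside : (s ≤ v.length ∧ d.2 ≤ v.length) ∨
          (v.length + u.length < s ∧ v.length + u.length < d.2)
      · have : ctxShift v u u' d.2 = d.2 - s + ctxShift v u u' s := by
          unfold ctxShift; split_ifs <;> omega
        exact this ▸ hasTwinRun_of_outside h (d :: t) hrun d.1 d.2 (by simp) (by omega)
      · -- the step enters `u`, or jumps over it when `u` is empty
        obtain ⟨b, hb, hb'⟩ : ∃ b, d.2 = v.length + entryPos u b ∧
            d.2 - s + ctxShift v u u' s = v.length + entryPos u' b := by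
          rcases hs with hs | hs
          · rw [ctxShift_of_le hs]
            refine ⟨true, ?_, ?_⟩ <;> simp only [entryPos] <;> omega
          · rw [ctxShift_of_lt (by omega)]
            refine ⟨false, ?_, ?_⟩ <;> simp only [entryPos] <;> omega
        rw [hb']
        exact hasTwinRun_of_entry h (fun p₂ _ => hasTwinRun_of_outside h p₂) hrun (by simp [← hb])
    obtain ⟨p', hrun', hh', hproj⟩ := htwin
    refine ⟨(q, ctxShift v u u' s) :: p', hrun'.append (l := [_]) (hrun'.1.cons ?_), rfl, ?_⟩
    · rw [hh']
      rintro _ ⟨⟩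
      exact step_ctxShift hs hstep
    · rw [projPath_cons, projPath_cons (ctxI v u' w), projPath_ctxShift v u u' w q hs, hproj]
termination_by p.length

end

end TwoWay

/-- If `u ∼_A u'` then for every context `(v, w)` the context paths coincide. -/
theorem stmt_16 {Q A : Type} (M : TwoWayAcc Q A) (u u' : List A)
    (h : M.toTwoWay.equiv u u') :
    ∀ (v w : List A) (p p' : List (Q × ℤ)),
      M.IsAccPath (v ++ u ++ w) p → M.IsAccPath (v ++ u' ++ w) p' →
      projPath (ctxI v u w) p = projPath (ctxI v u' w) p' := by
  rintro v w p p' ⟨hh, hc, qf, hl, -⟩ ⟨hh', hc', qf', hl', -⟩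
  have hrun : M.IsRightExitRun (v ++ u ++ w) p := ⟨hc, qf, hl⟩
  obtain ⟨p₂, hrun₂, hh₂, hproj⟩ : M.HasTwinRun v u u' w p (M.q0, 1) := by
    rcases Nat.eq_zero_or_pos v.length with hv | hv
    · -- the run starts inside `u`
      have h₁ : ∀ x : List A, (v.length : ℤ) + TwoWay.entryPos x true = 1 := by
        simp [TwoWay.entryPos, hv]
      rw [← h₁ u']
      exact TwoWay.hasTwinRun_of_entry h (fun p₂ _ => TwoWay.hasTwinRun_of_outside h p₂) hrun
        (by rw [h₁]; exact hh)
    · rw [← ctxShift_of_le (u := u) (u' := u') (show (1 : ℤ) ≤ v.length by omega)]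
      exact TwoWay.hasTwinRun_of_outside h p hrun _ 1 hh (by omega)
  rw [hproj, TwoWay.IsRightExitRun.eq ⟨hc', qf', hl'⟩ hrun₂ (hh'.trans hh₂.symm)]
end
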